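/- Assume 1 ≤ p_H ≤ p_B ≤ p_A ≤ ∞. Then the transit distance coincides with the single-gate mixed-norm distance, i.e. d_t(x,y) = d(x,y) for all x, y ∈ ℝ^d; consequently Problem (PT) reduces to Problem (P): the objective functions Σ_{a∈A} ω_a d_t(x,a) + Σ_{b∈B} ω_b d_t(x,b) and Σ_{a∈A} ω_a d(x,a) + Σ_{b∈B} ω_b d(x,b) are equal as functions of x ∈ ℝ^d. -/

import Mathlib

open scoped ENNReal BigOperators

/-- The `ℓ_p` norm on `ℝ^d` for `p : ℝ≥0∞` (intended for `1 ≤ p ≤ ∞`). -/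
noncomputable def lpNorm {d : ℕ} (p : ℝ≥0∞) (x : Fin d → ℝ) : ℝ :=
  if p = ∞ then ⨆ k, |x k| else (∑ k, |x k| ^ p.toReal) ^ (1 / p.toReal)

/-- The mixed-norm shortest-path distance (single gate point). -/
noncomputable def mixDist {d : ℕ} (pA pB : ℝ≥0∞) (α : Fin d → ℝ) (β : ℝ)
    (x y : Fin d → ℝ) : ℝ :=
  if ∑ i, α i * x i ≤ β then
    (if ∑ i, α i * y i ≤ β then lpNorm pA (x - y)
     else ⨅ z : {z : Fin d → ℝ // ∑ i, α i * z i = β},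
            lpNorm pA (z.1 - x) + lpNorm pB (z.1 - y))
  else
    (if ∑ i, α i * y i ≤ β then
       ⨅ z : {z : Fin d → ℝ // ∑ i, α i * z i = β},
         lpNorm pA (z.1 - y) + lpNorm pB (z.1 - x)
     else lpNorm pB (x - y))

/-- The transit distance (two gate points, traveling along the hyperplane with
norm `ℓ_{p_H}` allowed). -/
noncomputable def transDist {d : ℕ} (pA pB pH : ℝ≥0∞) (α : Fin d → ℝ) (β : ℝ)
    (x y : Fin d → ℝ) : ℝ :=
  if ∑ i, α i * x i ≤ β then
    (if ∑ i, α i * y i ≤ β then lpNorm pA (x - y)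
     else ⨅ zw : {zw : (Fin d → ℝ) × (Fin d → ℝ) //
            (∑ i, α i * zw.1 i = β) ∧ (∑ i, α i * zw.2 i = β)},
        lpNorm pA (zw.1.1 - x) + lpNorm pH (zw.1.1 - zw.1.2) + lpNorm pB (zw.1.2 - y))
  else
    (if ∑ i, α i * y i ≤ β then
       ⨅ zw : {zw : (Fin d → ℝ) × (Fin d → ℝ) //
            (∑ i, α i * zw.1 i = β) ∧ (∑ i, α i * zw.2 i = β)},
         lpNorm pA (zw.1.1 - y) + lpNorm pH (zw.1.1 - zw.1.2) + lpNorm pB (zw.1.2 - x)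
     else lpNorm pB (x - y))

/-!
A route through two gates `z, w` on the hyperplane is never shorter than the route through `z`
alone: as `p_H ≤ p_B`, `‖z - v‖_{p_B} ≤ ‖z - w‖_{p_B} + ‖w - v‖_{p_B} ≤ ‖z - w‖_{p_H} + ‖w - v‖_{p_B}`.
Conversely the gate pair `(z, z)` recovers every single-gate route, so the two infima agree and
`d_t = d`; the objectives of (PT) and (P) then agree term by term.
-/

theorem Real.rpow_sum_le_sum_rpow {ι : Type*} (s : Finset ι) {f : ι → ℝ} (hf : ∀ i, 0 ≤ f i)
    {r : ℝ} (hr₀ : 0 < r) (hr₁ : r ≤ 1) : (∑ i ∈ s, f i) ^ r ≤ ∑ i ∈ s, f i ^ r := by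
  induction s using Finset.cons_induction with
  | empty => simp [Real.zero_rpow hr₀.ne']
  | cons a s ha ih =>
    rw [Finset.sum_cons, Finset.sum_cons]
    calc (f a + ∑ i ∈ s, f i) ^ r ≤ f a ^ r + (∑ i ∈ s, f i) ^ r :=
          Real.rpow_add_le_add_rpow (hf a) (Finset.sum_nonneg fun i _ => hf i) hr₀.le hr₁
      _ ≤ f a ^ r + ∑ i ∈ s, f i ^ r := by gcongr

section LpNorm

variable {d : ℕ}

theorem lpNorm_nonneg (p : ℝ≥0∞) (x : Fin d → ℝ) : 0 ≤ lpNorm p x := by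
  unfold lpNorm
  split_ifs
  · exact Real.iSup_nonneg fun k => abs_nonneg (x k)
  · exact Real.rpow_nonneg (Finset.sum_nonneg fun k _ => Real.rpow_nonneg (abs_nonneg _) _) _

theorem lpNorm_zero {p : ℝ≥0∞} (hp : p ≠ 0) : lpNorm p (0 : Fin d → ℝ) = 0 := by
  unfold lpNorm
  split_ifs with hp'
  · simp
  · have : p.toReal ≠ 0 := ENNReal.toReal_ne_zero.mpr ⟨hp, hp'⟩
    simp [Real.zero_rpow this, inv_ne_zero this]

theorem lpNorm_eq_norm_toLp (p : ℝ≥0∞) [Fact (1 ≤ p)] (x : Fin d → ℝ) :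
    lpNorm p x = ‖WithLp.toLp p x‖ := by
  unfold lpNorm
  split_ifs with hp
  · subst hp
    simp [PiLp.norm_eq_ciSup]
  · have : 0 < p.toReal := ENNReal.toReal_pos (zero_lt_one.trans_le Fact.out).ne' hp
    simp [PiLp.norm_eq_sum this]

theorem lpNorm_sub_le_add {p : ℝ≥0∞} (hp : 1 ≤ p) (x y z : Fin d → ℝ) :
    lpNorm p (x - z) ≤ lpNorm p (x - y) + lpNorm p (y - z) := by
  have := Fact.mk hp
  simp only [lpNorm_eq_norm_toLp, WithLp.toLp_sub]
  exact norm_sub_le_norm_sub_add_norm_sub _ _ _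

theorem lpNorm_le_lpNorm_of_le {p q : ℝ≥0∞} (hq : q ≠ 0) (hqp : q ≤ p) (x : Fin d → ℝ) :
    lpNorm p x ≤ lpNorm q x := by
  rcases eq_or_ne q ∞ with rfl | hq'
  · rw [top_le_iff.mp hqp]
  have hs : 0 < q.toReal := ENNReal.toReal_pos hq hq'
  set s := q.toReal
  have hsum : 0 ≤ ∑ k, |x k| ^ s := Finset.sum_nonneg fun k _ => Real.rpow_nonneg (abs_nonneg _) _
  rw [lpNorm, lpNorm, if_neg hq']
  split_ifs with hp
  · refine Real.iSup_le (fun k => ?_) (Real.rpow_nonneg hsum _)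
    calc |x k| = (|x k| ^ s) ^ (1 / s) := by
          rw [one_div, Real.rpow_rpow_inv (abs_nonneg _) hs.ne']
      _ ≤ (∑ k, |x k| ^ s) ^ (1 / s) := by
          gcongr
          exact Finset.single_le_sum (f := fun k => |x k| ^ s)
            (fun k _ => Real.rpow_nonneg (abs_nonneg _) _) (Finset.mem_univ k)
  · set t := p.toReal
    have hst : s ≤ t := (ENNReal.toReal_le_toReal hq' hp).mpr hqp
    have ht : 0 < t := hs.trans_le hst
    calc (∑ k, |x k| ^ t) ^ (1 / t) = ((∑ k, |x k| ^ t) ^ (s / t)) ^ (1 / s) := by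
          rw [← Real.rpow_mul (Finset.sum_nonneg fun k _ => Real.rpow_nonneg (abs_nonneg _) _)]
          congr 1
          field_simp
      _ ≤ (∑ k, (|x k| ^ t) ^ (s / t)) ^ (1 / s) := by
          gcongr
          exact Real.rpow_sum_le_sum_rpow _ (fun k => Real.rpow_nonneg (abs_nonneg _) _)
            (div_pos hs ht) ((div_le_one ht).mpr hst)
      _ = (∑ k, |x k| ^ s) ^ (1 / s) := by
          congr 1
          refine Finset.sum_congr rfl fun k _ => ?_
          rw [← Real.rpow_mul (abs_nonneg _), mul_div_cancel₀ _ ht.ne']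

end LpNorm

theorem iInf_gate_pair_eq_iInf_gate {E : Type*} (P : E → Prop) (f g : E → ℝ) (c : E → E → ℝ)
    (hf : ∀ z, 0 ≤ f z) (hg : ∀ z, 0 ≤ g z) (hc : ∀ z, c z z = 0)
    (hgc : ∀ z w, g z ≤ c z w + g w) :
    ⨅ zw : {zw : E × E // P zw.1 ∧ P zw.2}, f zw.1.1 + c zw.1.1 zw.1.2 + g zw.1.2 =
      ⨅ z : {z // P z}, f z + g z := by
  rcases isEmpty_or_nonempty {z // P z} with hP | hP
  · -- both infima are then the junk value `0`
    have : IsEmpty {zw : E × E // P zw.1 ∧ P zw.2} := ⟨fun zw => hP.false ⟨_, zw.2.1⟩⟩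
    simp only [Real.iInf_of_isEmpty]
  have : Nonempty {zw : E × E // P zw.1 ∧ P zw.2} := hP.map fun z => ⟨(z.1, z.1), z.2, z.2⟩
  have hbdd : BddBelow (Set.range fun z : {z // P z} => f z + g z) :=
    ⟨0, by rintro _ ⟨z, rfl⟩; exact add_nonneg (hf z) (hg z)⟩
  have hbdd₂ : BddBelow (Set.range fun zw : {zw : E × E // P zw.1 ∧ P zw.2} =>
      f zw.1.1 + c zw.1.1 zw.1.2 + g zw.1.2) :=
    ⟨0, by rintro _ ⟨zw, rfl⟩; linarith [hf zw.1.1, hg zw.1.1, hgc zw.1.1 zw.1.2]⟩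
  apply le_antisymm
  · exact le_ciInf fun z => (ciInf_le hbdd₂ ⟨(z, z), z.2, z.2⟩).trans_eq (by simp [hc])
  · exact le_ciInf fun zw =>
      (ciInf_le hbdd ⟨zw.1.1, zw.2.1⟩).trans (by linarith [hgc zw.1.1 zw.1.2])

theorem transDist_eq_mixDist {d : ℕ} {pA pB pH : ℝ≥0∞} (hpH : 1 ≤ pH) (hHB : pH ≤ pB)
    (α : Fin d → ℝ) (β : ℝ) (x y : Fin d → ℝ) :
    transDist pA pB pH α β x y = mixDist pA pB α β x y := by
  have gate_pair_eq_gate (u v : Fin d → ℝ) := iInf_gate_pair_eq_iInf_gate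
    (fun z => ∑ i, α i * z i = β) (fun z => lpNorm pA (z - u)) (fun z => lpNorm pB (z - v))
    (fun z w => lpNorm pH (z - w)) (fun _ => lpNorm_nonneg _ _) (fun _ => lpNorm_nonneg _ _)
    (fun z => by rw [sub_self, lpNorm_zero (zero_lt_one.trans_le hpH).ne'])
    (fun z w => (lpNorm_sub_le_add (hpH.trans hHB) z w v).trans
      (add_le_add_left (lpNorm_le_lpNorm_of_le (zero_lt_one.trans_le hpH).ne' hHB _) _))
  unfold transDist mixDist
  split_ifs
  · rfl
  · exact gate_pair_eq_gate x y
  · exact gate_pair_eq_gate y x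
  · rfl

theorem stmt_15_general {d : ℕ} (pA pB pH : ℝ≥0∞)
    (hpH : 1 ≤ pH) (hHB : pH ≤ pB)
    (α : Fin d → ℝ) (β : ℝ)
    (A B : Finset (Fin d → ℝ))
    (ω : (Fin d → ℝ) → ℝ) :
    (∀ x y : Fin d → ℝ, transDist pA pB pH α β x y = mixDist pA pB α β x y) ∧
    (∀ x : Fin d → ℝ,
      (∑ a ∈ A, ω a * transDist pA pB pH α β x a) +
          ∑ b ∈ B, ω b * transDist pA pB pH α β x b =
        (∑ a ∈ A, ω a * mixDist pA pB α β x a) +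
          ∑ b ∈ B, ω b * mixDist pA pB α β x b) := by
  have hdist := transDist_eq_mixDist (pA := pA) hpH hHB α β
  exact ⟨hdist, fun x => by simp only [hdist]⟩

/-- Proposition: if `p_H ≤ p_B ≤ p_A`, the transit distance coincides with the
single-gate mixed-norm distance, and hence problem (PT) reduces to problem (P). -/
theorem stmt_15 {d : ℕ} (pA pB pH : ℝ≥0∞)
    (hpH : 1 ≤ pH) (hHB : pH ≤ pB) (hBA : pB ≤ pA)
    (α : Fin d → ℝ) (hα : α ≠ 0) (β : ℝ)
    (A B : Finset (Fin d → ℝ))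
    (hAH : ∀ a ∈ A, ∑ i, α i * a i ≤ β) (hBH : ∀ b ∈ B, β < ∑ i, α i * b i)
    (ω : (Fin d → ℝ) → ℝ) (hωA : ∀ a ∈ A, 0 < ω a) (hωB : ∀ b ∈ B, 0 < ω b) :
    (∀ x y : Fin d → ℝ, transDist pA pB pH α β x y = mixDist pA pB α β x y) ∧
    (∀ x : Fin d → ℝ,
      (∑ a ∈ A, ω a * transDist pA pB pH α β x a) +
          ∑ b ∈ B, ω b * transDist pA pB pH α β x b =
        (∑ a ∈ A, ω a * mixDist pA pB α β x a) +
          ∑ b ∈ B, ω b * mixDist pA pB α β x b) :=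
  stmt_15_general pA pB pH hpH hHB α β A B ω
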